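/- arXiv:2411.18173 — 9 statements merged into one kernel-verified Lean document; each statement's English description precedes it below -/
import Mathlib

section
/- Let s > 1 be real and let y : [0,∞) → ℝ be a continuous function satisfying 0 ≤ y(t) ≤ C₁ + C₂·y(t)^s for all t ≥ 0, where C₁, C₂ > 0 and C₁ < ((s-1)/s)·(s·C₂)^{1/(1-s)}. Set A = (s·C₂)^{1/(1-s)}. Then there exist constants a₁, a₂ with 0 < a₁ < A < a₂ < ∞ such that: if y(0) < A then y(t) ≤ a₁ for all t ≥ 0, and if y(0) > A then y(t) ≥ a₂ for all t ≥ 0. -/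
/-!
`A = (s C₂)^{1/(1-s)}` is the maximum point of `g x = x - C₂ x^s` on `(0, ∞)`, with maximum value
`g A = (s-1)/s · A`, so the hypothesis on `C₁` says `C₁ < g A`. By continuity `g > C₁` on an open
interval `(a₁, a₂) ∋ A`, whereas the inequality on `y` says `g (y t) ≤ C₁`; hence `y` never enters
`(a₁, a₂)`, and since `[0, ∞)` is connected, `y` stays on the side of that gap where it starts.
-/

open Set

section PreconnectedGap

variable {X α : Type*} [TopologicalSpace X] [LinearOrder α] [TopologicalSpace α]
  [OrderClosedTopology α] [DenselyOrdered α] {S : Set X} {f : X → α} {a b : α} {x₀ : X}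

theorem IsPreconnected.forall_le_of_forall_notMem_Ioo (hS : IsPreconnected S)
    (hf : ContinuousOn f S) (hab : a < b) (hgap : ∀ x ∈ S, f x ∉ Ioo a b) (hx₀ : x₀ ∈ S)
    (h₀ : f x₀ < b) : ∀ x ∈ S, f x ≤ a := by
  intro x hx
  by_contra! hax
  have hx₀a : f x₀ ≤ a := not_lt.mp fun ha => hgap x₀ hx₀ ⟨ha, h₀⟩
  obtain ⟨c, hac, hcb⟩ := exists_between (lt_min hab hax)
  obtain ⟨z, hz, rfl⟩ :=
    hS.intermediate_value hx₀ hx hf ⟨hx₀a.trans hac.le, hcb.le.trans (min_le_right _ _)⟩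
  exact hgap z hz ⟨hac, hcb.trans_le (min_le_left _ _)⟩

theorem IsPreconnected.forall_ge_of_forall_notMem_Ioo (hS : IsPreconnected S)
    (hf : ContinuousOn f S) (hab : a < b) (hgap : ∀ x ∈ S, f x ∉ Ioo a b) (hx₀ : x₀ ∈ S)
    (h₀ : a < f x₀) : ∀ x ∈ S, b ≤ f x :=
  hS.forall_le_of_forall_notMem_Ioo (f := OrderDual.toDual ∘ f)
    (continuous_toDual.comp_continuousOn hf) hab
    (fun x hx hfx => hgap x hx ⟨hfx.2, hfx.1⟩) hx₀ h₀

end PreconnectedGap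

theorem Real.mul_rpow_one_div_one_sub_rpow {s c : ℝ} (hs : s ≠ 1) (hsc : 0 < s * c) :
    c * ((s * c) ^ (1 / (1 - s))) ^ s = (s * c) ^ (1 / (1 - s)) / s := by
  have h1s : 1 - s ≠ 0 := sub_ne_zero.mpr hs.symm
  have hs0 : s ≠ 0 := by rintro rfl; simp at hsc
  have hsplit : (s * c) ^ (1 / (1 - s)) = (s * c) * (s * c) ^ (s / (1 - s)) := by
    rw [← Real.rpow_one_add' hsc.le (by field_simp; simpa using h1s)]
    congr 1; field_simp; ring
  rw [← Real.rpow_mul hsc.le, hsplit]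
  field_simp

theorem exists_Ioo_forall_lt_sub_mul_rpow {s C₁ C₂ : ℝ} (hs : 1 < s) (hC₂ : 0 < C₂)
    (hC₁ : C₁ < (s - 1) / s * (s * C₂) ^ ((1 : ℝ) / (1 - s))) :
    ∃ a₁ a₂ : ℝ, 0 < a₁ ∧ a₁ < (s * C₂) ^ ((1 : ℝ) / (1 - s)) ∧
      (s * C₂) ^ ((1 : ℝ) / (1 - s)) < a₂ ∧ ∀ x ∈ Ioo a₁ a₂, C₁ < x - C₂ * x ^ s := by
  set A := (s * C₂) ^ ((1 : ℝ) / (1 - s))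
  have hsC : 0 < s * C₂ := by positivity
  have hA : 0 < A := Real.rpow_pos_of_pos hsC _
  have hcrit : C₁ < A - C₂ * A ^ s := by
    rw [Real.mul_rpow_one_div_one_sub_rpow hs.ne' hsC]
    show C₁ < A - A / s
    convert hC₁ using 1
    field_simp
  have hnhds : {x : ℝ | C₁ < x - C₂ * x ^ s} ∈ nhds A :=
    (continuousAt_id.sub ((Real.continuousAt_rpow_const A s (.inl hA.ne')).const_mul C₂)).eventually
      (eventually_gt_nhds hcrit)
  obtain ⟨a₁, ⟨ha₁, ha₁A⟩, hIoc⟩ := exists_Ioc_subset_of_mem_nhds' hnhds (half_lt_self hA)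
  obtain ⟨a₂, hAa₂, hIco⟩ := exists_Ico_subset_of_mem_nhds hnhds ⟨A + 1, lt_add_one A⟩
  refine ⟨a₁, a₂, (half_pos hA).trans_le ha₁, ha₁A, hAa₂, ?_⟩
  rw [← Ioc_union_Ico_eq_Ioo ha₁A hAa₂]
  exact union_subset hIoc hIco

theorem stmt_0_general (s C₁ C₂ : ℝ) (hs : 1 < s) (hC₂ : 0 < C₂)
    (hsmall : C₁ < (s - 1) / s * (s * C₂) ^ ((1 : ℝ) / (1 - s)))
    (y : ℝ → ℝ) (hy : ContinuousOn y (Set.Ici 0))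
    (hbound : ∀ t : ℝ, 0 ≤ t → 0 ≤ y t ∧ y t ≤ C₁ + C₂ * (y t) ^ s) :
    ∃ a₁ a₂ : ℝ, 0 < a₁ ∧ a₁ < (s * C₂) ^ ((1 : ℝ) / (1 - s)) ∧
      (s * C₂) ^ ((1 : ℝ) / (1 - s)) < a₂ ∧
      ((y 0 < (s * C₂) ^ ((1 : ℝ) / (1 - s))) → ∀ t : ℝ, 0 ≤ t → y t ≤ a₁) ∧
      ((y 0 > (s * C₂) ^ ((1 : ℝ) / (1 - s))) → ∀ t : ℝ, 0 ≤ t → a₂ ≤ y t) := by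
  obtain ⟨a₁, a₂, ha₁, ha₁A, hAa₂, hgap⟩ := exists_Ioo_forall_lt_sub_mul_rpow hs hC₂ hsmall
  have havoid : ∀ t ∈ Ici (0 : ℝ), y t ∉ Ioo a₁ a₂ := fun t ht hyt =>
    (hgap _ hyt).not_ge (by linarith [(hbound t ht).2])
  refine ⟨a₁, a₂, ha₁, ha₁A, hAa₂, fun h₀ => ?_, fun h₀ => ?_⟩
  · exact isPreconnected_Ici.forall_le_of_forall_notMem_Ioo hy (ha₁A.trans hAa₂) havoid
      self_mem_Ici (h₀.trans hAa₂)
  · exact isPreconnected_Ici.forall_ge_of_forall_notMem_Ioo hy (ha₁A.trans hAa₂) havoid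
      self_mem_Ici (ha₁A.trans h₀)

/-- Dichotomy lemma for continuous functions satisfying a superlinear
self-bounding inequality `0 ≤ y t ≤ C₁ + C₂ * (y t)^s` with `s > 1`. -/
theorem stmt_0 (s C₁ C₂ : ℝ) (hs : 1 < s) (hC₁ : 0 < C₁) (hC₂ : 0 < C₂)
    (hsmall : C₁ < (s - 1) / s * (s * C₂) ^ ((1 : ℝ) / (1 - s)))
    (y : ℝ → ℝ) (hy : ContinuousOn y (Set.Ici 0))
    (hbound : ∀ t : ℝ, 0 ≤ t → 0 ≤ y t ∧ y t ≤ C₁ + C₂ * (y t) ^ s) :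
    ∃ a₁ a₂ : ℝ, 0 < a₁ ∧ a₁ < (s * C₂) ^ ((1 : ℝ) / (1 - s)) ∧
      (s * C₂) ^ ((1 : ℝ) / (1 - s)) < a₂ ∧
      ((y 0 < (s * C₂) ^ ((1 : ℝ) / (1 - s))) → ∀ t : ℝ, 0 ≤ t → y t ≤ a₁) ∧
      ((y 0 > (s * C₂) ^ ((1 : ℝ) / (1 - s))) → ∀ t : ℝ, 0 ≤ t → a₂ ≤ y t) :=
  stmt_0_general s C₁ C₂ hs hC₂ hsmall y hy hbound
end

section
/- Let T ∈ (0, ∞] and let I : [0, T) → ℝ be twice differentiable with I(t) > 0 for all t ∈ [0, T), I'(0) > 0, and I(t)·I''(t) - (5/4)·(I'(t))² ≥ 0 for all t ∈ [0, T). Then T ≤ 4·I(0)/I'(0). (Consequently, a positive function satisfying this differential inequality cannot exist on all of [0, ∞); this is the concavity argument, applied to I₁ = I^{-1/4}, underlying the blow-up result for the Klein–Gordon–Boussinesq system when the energy is negative or zero.) -/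
open scoped ENNReal

/-- Concavity (applied to `I^{-1/4}`) blow-up argument: a twice differentiable,
strictly positive function `I` on `[0, T)` with `I'(0) > 0` and
`I·I'' - (5/4)·(I')² ≥ 0` forces `T ≤ 4·I(0)/I'(0)`. -/
theorem stmt_1 (T : ℝ≥0∞) (hT : 0 < T) (I I' I'' : ℝ → ℝ)
    (S : Set ℝ) (hS : S = {t : ℝ | 0 ≤ t ∧ ENNReal.ofReal t < T})
    (hder1 : ∀ t ∈ S, HasDerivWithinAt I (I' t) S t)
    (hder2 : ∀ t ∈ S, HasDerivWithinAt I' (I'' t) S t)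
    (hpos : ∀ t ∈ S, 0 < I t)
    (h0 : 0 < I' 0)
    (hineq : ∀ t ∈ S, I t * I'' t - (5 / 4) * (I' t) ^ 2 ≥ 0) :
    T ≤ ENNReal.ofReal (4 * I 0 / I' 0) := by
  -- S is order-connected, hence convex
  have hord : S.OrdConnected := by
    constructor
    intro a ha b hb c hc
    rw [hS] at ha hb ⊢
    exact ⟨le_trans ha.1 hc.1, lt_of_le_of_lt (ENNReal.ofReal_le_ofReal hc.2) hb.2⟩
  have hconv : Convex ℝ S := hord.convex
  have h0S : (0 : ℝ) ∈ S := by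
    rw [hS]; exact ⟨le_refl 0, by simpa using hT⟩
  -- I'' ≥ 0 on S
  have hI'' : ∀ t ∈ S, 0 ≤ I'' t := by
    intro t ht
    have h1 := hineq t ht
    have h2 := hpos t ht
    nlinarith [sq_nonneg (I' t)]
  -- I' is monotone on S, hence positive on S
  have hmono : MonotoneOn I' S := by
    refine monotoneOn_of_hasDerivWithinAt_nonneg hconv
      (fun t ht => (hder2 t ht).continuousWithinAt)
      (fun t ht => (hder2 t (interior_subset ht)).mono interior_subset)
      (fun t ht => hI'' t (interior_subset ht))
  have hI' : ∀ t ∈ S, 0 < I' t := by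
    intro t ht
    have h0t : (0 : ℝ) ≤ t := by rw [hS] at ht; exact ht.1
    exact lt_of_lt_of_le h0 (hmono h0S ht h0t)
  -- The auxiliary function H = I/I' + t/4 is antitone on S
  set H : ℝ → ℝ := fun t => I t / I' t + t / 4 with hH
  have hHder : ∀ t ∈ S, HasDerivWithinAt H
      ((I' t * I' t - I t * I'' t) / (I' t) ^ 2 + 1 / 4) S t := by
    intro t ht
    exact ((hder1 t ht).div (hder2 t ht) (hI' t ht).ne').add
      ((hasDerivWithinAt_id t S).div_const 4)
  have hHanti : AntitoneOn H S := by
    refine antitoneOn_of_hasDerivWithinAt_nonpos hconv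
      (fun t ht => (hHder t ht).continuousWithinAt)
      (fun t ht => (hHder t (interior_subset ht)).mono interior_subset)
      (fun t ht => ?_)
    have htS := interior_subset ht
    have h1 := hineq t htS
    have h2 := hI' t htS
    have hsq : (0 : ℝ) < (I' t) ^ 2 := by positivity
    have : (I' t * I' t - I t * I'' t) / (I' t) ^ 2 ≤ -(1 / 4) := by
      rw [div_le_iff₀ hsq]
      nlinarith
    linarith
  -- Every t ∈ S satisfies t < 4·I 0 / I' 0
  have hbound : ∀ t ∈ S, t < 4 * I 0 / I' 0 := by
    intro t ht
    have h0t : (0 : ℝ) ≤ t := by rw [hS] at ht; exact ht.1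
    have hle : H t ≤ H 0 := hHanti h0S ht h0t
    have hH0 : H 0 = I 0 / I' 0 := by simp [hH]
    have hItpos : 0 < I t / I' t := div_pos (hpos t ht) (hI' t ht)
    have hdiv : I 0 / I' 0 > 0 := div_pos (hpos 0 h0S) h0
    have : t / 4 < I 0 / I' 0 := by
      rw [hH0] at hle
      simp only [hH] at hle
      linarith
    calc t = 4 * (t / 4) := by ring
      _ < 4 * (I 0 / I' 0) := by linarith
      _ = 4 * I 0 / I' 0 := by ring
  -- conclude
  by_contra hcon
  push_neg at hcon
  have hcpos : 0 < 4 * I 0 / I' 0 := by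
    have := hpos 0 h0S; positivity
  have hcS : (4 * I 0 / I' 0) ∈ S := by
    rw [hS]; exact ⟨hcpos.le, hcon⟩
  exact lt_irrefl _ (hbound _ hcS)
end

section
/- Let T ∈ (0, ∞], E₀ ≥ 0, and let I : [0, T) → ℝ be twice differentiable with I(t) > 0 for all t ∈ [0, T), I'(0) > 0, (I'(0))² > 8·E₀·I(0), and I(t)·I''(t) - (5/4)·(I'(t))² ≥ -6·E₀·I(t) for all t ∈ [0, T). Then T ≤ 4·I(0)/√((I'(0))² - 8·E₀·I(0)). (This is the quantitative concavity-type blow-up argument used in the positive-energy case of the blow-up theorem for the Klein–Gordon–Boussinesq system.) -/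
open scoped ENNReal
open Set

/-!
Put `I₁ = I ^ (-1/4)`. The differential inequality says `I₁'' ≤ (3/2) E₀ I₁⁵`, so while `I' ≥ 0`
(i.e. `I₁' ≤ 0`) the energy `ℰ = (I₁')² - E₀ I₁⁶ / 2` does not decrease. By the gap hypothesis
`ℰ(0) > 0`, while `ℰ ≤ 0` wherever `I'` vanishes; so `I'` never vanishes and `ℰ ≥ ℰ(0)` throughout.
Hence `I₁' ≤ -√ℰ(0)`, and the positive function `I₁` would reach zero by time
`I₁(0) / √ℰ(0) = 4 I(0) / √(I'(0)² - 8 E₀ I(0))`.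
-/

theorem ContinuousOn.forall_pos_of_ne_zero_of_pos_before {f : ℝ → ℝ} {a b : ℝ}
    (hf : ContinuousOn f (Icc a b)) (ha : 0 < f a)
    (hne : ∀ t ∈ Ioc a b, (∀ s ∈ Ico a t, 0 < f s) → f t ≠ 0) :
    ∀ t ∈ Icc a b, 0 < f t := by
  by_contra! ⟨t, ht, hft⟩
  set Z := Icc a b ∩ f ⁻¹' {0}
  have zero_before : ∀ s ∈ Icc a b, f s ≤ 0 → ∃ z ∈ Z, z ≤ s := by
    intro s hs hfs
    obtain ⟨z, hz, hfz⟩ :=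
      intermediate_value_Icc' hs.1 (hf.mono (Icc_subset_Icc_right hs.2)) ⟨hfs, ha.le⟩
    exact ⟨z, ⟨⟨hz.1, hz.2.trans hs.2⟩, hfz⟩, hz.2⟩
  have hZ : BddBelow Z := ⟨a, fun z hz => hz.1.1⟩
  obtain ⟨z, hz, -⟩ := zero_before t ht hft
  have first_zero : sInf Z ∈ Z :=
    (hf.preimage_isClosed_of_isClosed isClosed_Icc isClosed_singleton).csInf_mem ⟨z, hz⟩ hZ
  have pos_before : ∀ s ∈ Ico a (sInf Z), 0 < f s := by
    intro s hs
    by_contra! hfs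
    obtain ⟨z', hz', hz's⟩ := zero_before s ⟨hs.1, hs.2.le.trans first_zero.1.2⟩ hfs
    exact (csInf_le hZ hz').not_gt (hz's.trans_lt hs.2)
  have ha_lt : a < sInf Z :=
    first_zero.1.1.lt_of_ne fun h => ha.ne' (h ▸ first_zero.2)
  exact hne _ ⟨ha_lt, first_zero.1.2⟩ pos_before first_zero.2

theorem monotoneOn_Icc_of_hasDerivWithinAt_nonneg {f f' : ℝ → ℝ} {a b : ℝ}
    (hf : ∀ x ∈ Icc a b, HasDerivWithinAt f (f' x) (Icc a b) x)
    (hf' : ∀ x ∈ Ioo a b, 0 ≤ f' x) :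
    MonotoneOn f (Icc a b) :=
  monotoneOn_of_hasDerivWithinAt_nonneg (convex_Icc a b)
    (fun x hx => (hf x hx).continuousWithinAt)
    (by simpa only [interior_Icc] using
      fun x hx => (hf x (Ioo_subset_Icc_self hx)).mono Ioo_subset_Icc_self)
    (by simpa only [interior_Icc] using hf')

theorem ENNReal.le_ofReal_of_forall_lt {T : ℝ≥0∞} {B : ℝ}
    (h : ∀ b, 0 ≤ b → ENNReal.ofReal b < T → b < B) : T ≤ ENNReal.ofReal B := by
  by_contra! hB
  rcases le_total 0 B with hB0 | hB0
  · exact (h B hB0 hB).false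
  · exact (h 0 le_rfl (by simpa [ENNReal.ofReal_of_nonpos hB0] using hB)).not_ge hB0

theorem Real.rpow_neg_quarter_pow_four_mul_self {x : ℝ} (hx : 0 < x) :
    (x ^ (-(1 / 4) : ℝ)) ^ 4 * x = 1 := by
  rw [← Real.rpow_natCast, ← Real.rpow_mul hx.le]
  norm_num [Real.rpow_neg_one, hx.ne']

theorem HasDerivWithinAt.rpow_neg_quarter {f : ℝ → ℝ} {f' x : ℝ} {s : Set ℝ}
    (hf : HasDerivWithinAt f f' s x) (hx : 0 < f x) :
    HasDerivWithinAt (fun t => f t ^ (-(1 / 4) : ℝ))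
      (-(1 / 4) * (f x ^ (-(1 / 4) : ℝ)) ^ 5 * f') s x := by
  convert hf.rpow_const (p := -(1 / 4)) (Or.inl hx.ne') using 1
  rw [← Real.rpow_natCast, ← Real.rpow_mul hx.le]
  norm_num
  ring

/-- Sixteen times the energy `(I₁')² - E₀ I₁⁶ / 2` of `I₁ = I ^ (-1/4)`, via `I₁' = -I₁⁵ I' / 4`. -/
noncomputable def blowupEnergy (E₀ : ℝ) (I I' : ℝ → ℝ) (t : ℝ) : ℝ :=
  I' t ^ 2 * (I t ^ (-(1 / 4) : ℝ)) ^ 10 - 8 * E₀ * (I t ^ (-(1 / 4) : ℝ)) ^ 6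

section

variable {E₀ : ℝ} {I I' I'' : ℝ → ℝ}

theorem blowupEnergy_eq {t : ℝ} (ht : 0 < I t) :
    blowupEnergy E₀ I I' t = (I t ^ (-(1 / 4) : ℝ)) ^ 10 * (I' t ^ 2 - 8 * E₀ * I t) := by
  unfold blowupEnergy
  linear_combination (8 * E₀ * (I t ^ (-(1 / 4) : ℝ)) ^ 6) *
    Real.rpow_neg_quarter_pow_four_mul_self ht

theorem hasDerivWithinAt_blowupEnergy {s : Set ℝ} {x : ℝ}
    (hI : HasDerivWithinAt I (I' x) s x) (hI' : HasDerivWithinAt I' (I'' x) s x)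
    (hx : 0 < I x) :
    HasDerivWithinAt (blowupEnergy E₀ I I')
      (I' x * (I x ^ (-(1 / 4) : ℝ)) ^ 14 *
        (2 * (I x * I'' x) - 5 / 2 * I' x ^ 2 + 12 * E₀ * I x)) s x := by
  have hK := hI.rpow_neg_quarter hx
  refine HasDerivWithinAt.congr_deriv
    (((hI'.fun_pow 2).mul (hK.fun_pow 10)).sub ((hK.fun_pow 6).const_mul (8 * E₀))) ?_
  push_cast
  linear_combination (-(2 * I' x * I'' x + 12 * E₀ * I' x) * (I x ^ (-(1 / 4) : ℝ)) ^ 10) *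
    Real.rpow_neg_quarter_pow_four_mul_self hx

theorem blowupEnergy_monotoneOn {s : Set ℝ} {a b : ℝ} (hab : Icc a b ⊆ s)
    (hder1 : ∀ t ∈ s, HasDerivWithinAt I (I' t) s t)
    (hder2 : ∀ t ∈ s, HasDerivWithinAt I' (I'' t) s t)
    (hpos : ∀ t ∈ s, 0 < I t)
    (hineq : ∀ t ∈ s, I t * I'' t - (5 / 4) * (I' t) ^ 2 ≥ -6 * E₀ * I t)
    (hI' : ∀ t ∈ Ioo a b, 0 ≤ I' t) :
    MonotoneOn (blowupEnergy E₀ I I') (Icc a b) := by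
  refine monotoneOn_Icc_of_hasDerivWithinAt_nonneg (fun t ht =>
    (hasDerivWithinAt_blowupEnergy (hder1 t (hab ht)) (hder2 t (hab ht)) (hpos t (hab ht))).mono
      hab) fun t ht => ?_
  have := hineq t (hab (Ioo_subset_Icc_self ht))
  exact mul_nonneg (mul_nonneg (hI' t ht) (by positivity)) (by linarith)

theorem deriv_pos_of_blowupEnergy_pos {s : Set ℝ} {b : ℝ} (hE₀ : 0 ≤ E₀) (hb : Icc 0 b ⊆ s)
    (hder1 : ∀ t ∈ s, HasDerivWithinAt I (I' t) s t)
    (hder2 : ∀ t ∈ s, HasDerivWithinAt I' (I'' t) s t)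
    (hpos : ∀ t ∈ s, 0 < I t)
    (hineq : ∀ t ∈ s, I t * I'' t - (5 / 4) * (I' t) ^ 2 ≥ -6 * E₀ * I t)
    (h0 : 0 < I' 0) (hW0 : 0 < blowupEnergy E₀ I I' 0) :
    ∀ t ∈ Icc 0 b, 0 < I' t := by
  refine ContinuousOn.forall_pos_of_ne_zero_of_pos_before
    (fun t ht => ((hder2 t (hb ht)).mono hb).continuousWithinAt) h0 fun t ht hbefore hzero => ?_
  have hsub : Icc 0 t ⊆ s := (Icc_subset_Icc_right ht.2).trans hb
  have hmono := blowupEnergy_monotoneOn hsub hder1 hder2 hpos hineq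
    fun u hu => (hbefore u (Ioo_subset_Ico_self hu)).le
  have hWt := hmono (left_mem_Icc.2 ht.1.le) (right_mem_Icc.2 ht.1.le) ht.1.le
  have hIt := hpos t (hsub (right_mem_Icc.2 ht.1.le))
  have : blowupEnergy E₀ I I' t ≤ 0 := by
    rw [blowupEnergy_eq hIt, hzero]
    exact mul_nonpos_of_nonneg_of_nonpos (by positivity) (by nlinarith [mul_nonneg hE₀ hIt.le])
  linarith

theorem lt_four_mul_div_sqrt_of_Icc_subset {s : Set ℝ} {b : ℝ} (hE₀ : 0 ≤ E₀) (hb : 0 ≤ b)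
    (hbs : Icc 0 b ⊆ s)
    (hder1 : ∀ t ∈ s, HasDerivWithinAt I (I' t) s t)
    (hder2 : ∀ t ∈ s, HasDerivWithinAt I' (I'' t) s t)
    (hpos : ∀ t ∈ s, 0 < I t)
    (hineq : ∀ t ∈ s, I t * I'' t - (5 / 4) * (I' t) ^ 2 ≥ -6 * E₀ * I t)
    (h0 : 0 < I' 0) (hgap : (I' 0) ^ 2 > 8 * E₀ * I 0) :
    b < 4 * I 0 / √((I' 0) ^ 2 - 8 * E₀ * I 0) := by
  have h0b : (0 : ℝ) ∈ Icc 0 b := left_mem_Icc.2 hb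
  have hI0 := hpos 0 (hbs h0b)
  set K : ℝ → ℝ := fun t => I t ^ (-(1 / 4) : ℝ)
  have hK0 : 0 < K 0 := Real.rpow_pos_of_pos hI0 _
  have hD : 0 < √((I' 0) ^ 2 - 8 * E₀ * I 0) := Real.sqrt_pos.2 (sub_pos.2 hgap)
  set c := K 0 ^ 5 * √((I' 0) ^ 2 - 8 * E₀ * I 0)
  have hc : c ^ 2 = blowupEnergy E₀ I I' 0 := by
    rw [blowupEnergy_eq hI0, mul_pow, Real.sq_sqrt (sub_pos.2 hgap).le]
    ring
  have hI' := deriv_pos_of_blowupEnergy_pos hE₀ hbs hder1 hder2 hpos hineq h0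
    (hc ▸ pow_pos (mul_pos (pow_pos hK0 5) hD) 2)
  have hW := blowupEnergy_monotoneOn hbs hder1 hder2 hpos hineq
    fun t ht => (hI' t (Ioo_subset_Icc_self ht)).le
  have rate : ∀ t ∈ Icc 0 b, c ≤ K t ^ 5 * I' t := by
    intro t ht
    have hKt : 0 < K t := Real.rpow_pos_of_pos (hpos t (hbs ht)) _
    refine (abs_le_of_sq_le_sq' ?_ (mul_pos (pow_pos hKt 5) (hI' t ht)).le).2
    calc c ^ 2 = blowupEnergy E₀ I I' 0 := hc
      _ ≤ blowupEnergy E₀ I I' t := hW h0b ht ht.1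
      _ ≤ (K t ^ 5 * I' t) ^ 2 := by
        unfold blowupEnergy
        nlinarith [pow_pos hKt 6]
  have hdecay : MonotoneOn (fun t => -K t - c / 4 * t) (Icc 0 b) := by
    refine monotoneOn_Icc_of_hasDerivWithinAt_nonneg (f' := fun t => (K t ^ 5 * I' t - c) / 4)
      (fun t ht => ?_) fun t ht => by linarith [rate t (Ioo_subset_Icc_self ht)]
    refine ((((hder1 t (hbs ht)).rpow_neg_quarter (hpos t (hbs ht))).fun_neg.fun_sub
      ((hasDerivWithinAt_id t s).const_mul (c / 4))).mono hbs).congr_deriv ?_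
    simp only [K]
    ring
  have hKb : 0 < K b := Real.rpow_pos_of_pos (hpos b (hbs (right_mem_Icc.2 hb))) _
  have hcb : c * b < 4 * K 0 := by linarith [hdecay h0b (right_mem_Icc.2 hb) hb]
  rw [lt_div_iff₀ hD]
  refine lt_of_mul_lt_mul_left (a := K 0 ^ 5) ?_ (by positivity)
  linear_combination hcb - 4 * K 0 * Real.rpow_neg_quarter_pow_four_mul_self hI0

end

theorem stmt_2_general (T : ℝ≥0∞) (E₀ : ℝ) (hE₀ : 0 ≤ E₀)
    (I I' I'' : ℝ → ℝ)
    (S : Set ℝ) (hS : S = {t : ℝ | 0 ≤ t ∧ ENNReal.ofReal t < T})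
    (hder1 : ∀ t ∈ S, HasDerivWithinAt I (I' t) S t)
    (hder2 : ∀ t ∈ S, HasDerivWithinAt I' (I'' t) S t)
    (hpos : ∀ t ∈ S, 0 < I t)
    (h0 : 0 < I' 0)
    (hgap : (I' 0) ^ 2 > 8 * E₀ * I 0)
    (hineq : ∀ t ∈ S, I t * I'' t - (5 / 4) * (I' t) ^ 2 ≥ -6 * E₀ * I t) :
    T ≤ ENNReal.ofReal (4 * I 0 / Real.sqrt ((I' 0) ^ 2 - 8 * E₀ * I 0)) := by
  refine ENNReal.le_ofReal_of_forall_lt fun b hb hbT => ?_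
  have hbS : Icc 0 b ⊆ S := by
    rw [hS]
    exact fun t ht => ⟨ht.1, (ENNReal.ofReal_le_ofReal ht.2).trans_lt hbT⟩
  exact lt_four_mul_div_sqrt_of_Icc_subset hE₀ hb hbS hder1 hder2 hpos hineq h0 hgap

/-- Quantitative concavity-type blow-up argument (positive-energy case):
a twice differentiable, strictly positive `I` on `[0, T)` with `I'(0) > 0`,
`(I'(0))² > 8·E₀·I(0)` and `I·I'' - (5/4)(I')² ≥ -6·E₀·I` forces
`T ≤ 4·I(0)/√((I'(0))² - 8·E₀·I(0))`. -/
theorem stmt_2 (T : ℝ≥0∞) (hT : 0 < T) (E₀ : ℝ) (hE₀ : 0 ≤ E₀)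
    (I I' I'' : ℝ → ℝ)
    (S : Set ℝ) (hS : S = {t : ℝ | 0 ≤ t ∧ ENNReal.ofReal t < T})
    (hder1 : ∀ t ∈ S, HasDerivWithinAt I (I' t) S t)
    (hder2 : ∀ t ∈ S, HasDerivWithinAt I' (I'' t) S t)
    (hpos : ∀ t ∈ S, 0 < I t)
    (h0 : 0 < I' 0)
    (hgap : (I' 0) ^ 2 > 8 * E₀ * I 0)
    (hineq : ∀ t ∈ S, I t * I'' t - (5 / 4) * (I' t) ^ 2 ≥ -6 * E₀ * I t) :
    T ≤ ENNReal.ofReal (4 * I 0 / Real.sqrt ((I' 0) ^ 2 - 8 * E₀ * I 0)) :=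
  stmt_2_general T E₀ hE₀ I I' I'' S hS hder1 hder2 hpos h0 hgap hineq
end

section
/- Let α, c be real numbers with α ≠ 0, c ≠ 0, c² ≠ 1, and set A = (c²-α²)/(c²·(1-c²)), B = (1-α²/c²) + 1/(1-c²). Then the following are equivalent: (i) α² < c² < 1; (ii) A > 0 and B > 0; and in this case additionally B > 2·√A (i.e. the characteristic equation λ⁴ - Bλ² + A = 0 has four real roots, two positive and two negative). This characterizes region 2 of the bifurcation diagram. -/
/-- Characterization of region 2 of the bifurcation diagram:
`α² < c² < 1` if and only if `A > 0` and `B > 0`, and in this case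
moreover `B > 2√A`. -/
theorem stmt_5 (α c : ℝ) (hα : α ≠ 0) (hc : c ≠ 0) (hc1 : c ^ 2 ≠ 1)
    (A B : ℝ)
    (hA : A = (c ^ 2 - α ^ 2) / (c ^ 2 * (1 - c ^ 2)))
    (hB : B = (1 - α ^ 2 / c ^ 2) + 1 / (1 - c ^ 2)) :
    ((α ^ 2 < c ^ 2 ∧ c ^ 2 < 1) ↔ (0 < A ∧ 0 < B)) ∧
      ((α ^ 2 < c ^ 2 ∧ c ^ 2 < 1) → B > 2 * Real.sqrt A) := by
  have hc2 : (0:ℝ) < c ^ 2 := by positivity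
  have hα2 : (0:ℝ) < α ^ 2 := by positivity
  have fwd : (α ^ 2 < c ^ 2 ∧ c ^ 2 < 1) → (0 < A ∧ 0 < B) := by
    rintro ⟨h1, h2⟩
    have h3 : 0 < 1 - c ^ 2 := by linarith
    constructor
    · rw [hA]
      exact div_pos (by linarith) (mul_pos hc2 h3)
    · rw [hB]
      have hu : α ^ 2 / c ^ 2 < 1 := (div_lt_one hc2).mpr h1
      have hv : 0 < 1 / (1 - c ^ 2) := by positivity
      linarith
  refine ⟨⟨fwd, ?_⟩, ?_⟩
  · rintro ⟨hA', hB'⟩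
    rcases lt_or_gt_of_ne hc1 with h2 | h2
    · have h3 : 0 < 1 - c ^ 2 := by linarith
      have key : c ^ 2 - α ^ 2 = A * (c ^ 2 * (1 - c ^ 2)) := by
        rw [hA]; field_simp
      have : 0 < c ^ 2 - α ^ 2 := by
        rw [key]; exact mul_pos hA' (mul_pos hc2 h3)
      exact ⟨by linarith, h2⟩
    · exfalso
      have h3 : 1 - c ^ 2 < 0 := by linarith
      have key : c ^ 2 - α ^ 2 = A * (c ^ 2 * (1 - c ^ 2)) := by
        rw [hA]; field_simp [hc2.ne', h3.ne]
      have hnum : c ^ 2 - α ^ 2 < 0 := by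
        rw [key]; exact mul_neg_of_pos_of_neg hA' (mul_neg_of_pos_of_neg hc2 h3)
      have hu : 1 - α ^ 2 / c ^ 2 < 0 := by
        have : 1 < α ^ 2 / c ^ 2 := (one_lt_div hc2).mpr (by linarith)
        linarith
      have hv : 1 / (1 - c ^ 2) < 0 := by
        exact div_neg_of_pos_of_neg one_pos h3
      rw [hB] at hB'
      linarith
  · rintro ⟨h1, h2⟩
    obtain ⟨hA', hB'⟩ := fwd ⟨h1, h2⟩
    have h3 : 0 < 1 - c ^ 2 := by linarith
    have h4 : 1 - c ^ 2 < 1 := by linarith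
    have hu : 1 - α ^ 2 / c ^ 2 < 1 := by
      have : 0 < α ^ 2 / c ^ 2 := by positivity
      linarith
    have hv : 1 < 1 / (1 - c ^ 2) := (one_lt_one_div h3 h4)
    have hAe : A = (1 - α ^ 2 / c ^ 2) * (1 / (1 - c ^ 2)) := by
      rw [hA]; field_simp
    have hp : 0 < (1 / (1 - c ^ 2) - 1) * (1 - (1 - α ^ 2 / c ^ 2)) :=
      mul_pos (by linarith) (by linarith)
    have hkey : 4 * A < B ^ 2 := by
      rw [hAe, hB]
      nlinarith [sq_nonneg ((1 - α ^ 2 / c ^ 2) - 1 / (1 - c ^ 2)), hp]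
    have hs : Real.sqrt (4 * A) < B := (Real.sqrt_lt' hB').mpr hkey
    have h24 : Real.sqrt 4 = 2 := by
      rw [show (4:ℝ) = 2 ^ 2 by norm_num]; exact Real.sqrt_sq (by norm_num)
    have h4A : Real.sqrt (4 * A) = 2 * Real.sqrt A := by
      rw [Real.sqrt_mul (by norm_num : (0:ℝ) ≤ 4), h24]
    linarith [h4A ▸ hs]
end

section
/- Let α, c be real numbers with α ≠ 0, c ≠ 0, c² ≠ 1, and set A = (c²-α²)/(c²·(1-c²)), B = (1-α²/c²) + 1/(1-c²), z₊(α) = ((2+α²) + √(α⁴+4))/2, z₋(α) = ((2+α²) - √(α⁴+4))/2. Then A < 0 and B > 0 hold if and only if either c² > z₊(α), or z₋(α) < c² < min{1, α²}. (This characterizes region 3R of the bifurcation diagram: the first alternative corresponds to μ = 1 - α²/c² > 0, the second to μ < 0.) -/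
/-- Characterization of region 3R of the bifurcation diagram: `A < 0` and
`B > 0` hold if and only if `c² > z₊(α)` or `z₋(α) < c² < min{1, α²}`. -/
theorem stmt_8 (α c : ℝ) (hα : α ≠ 0) (hc : c ≠ 0) (hc1 : c ^ 2 ≠ 1)
    (A B zp zm : ℝ)
    (hA : A = (c ^ 2 - α ^ 2) / (c ^ 2 * (1 - c ^ 2)))
    (hB : B = (1 - α ^ 2 / c ^ 2) + 1 / (1 - c ^ 2))
    (hzp : zp = ((2 + α ^ 2) + Real.sqrt (α ^ 4 + 4)) / 2)
    (hzm : zm = ((2 + α ^ 2) - Real.sqrt (α ^ 4 + 4)) / 2) :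
    (A < 0 ∧ 0 < B) ↔ (c ^ 2 > zp ∨ (zm < c ^ 2 ∧ c ^ 2 < min 1 (α ^ 2))) := by
  have hx : 0 < c ^ 2 := by positivity
  have hy : 0 < α ^ 2 := by positivity
  set s := Real.sqrt (α ^ 4 + 4) with hsdef
  have hs2 : s ^ 2 = α ^ 4 + 4 := Real.sq_sqrt (by positivity)
  have hs0 : 0 < s := Real.sqrt_pos.mpr (by positivity)
  have hzm1 : zm < 1 := by rw [hzm]; nlinarith [sq_nonneg (s - α ^ 2)]
  have hzp1 : 1 < zp := by rw [hzp]; nlinarith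
  have hzmy : zm < α ^ 2 := by rw [hzm]; nlinarith [sq_nonneg (s + α ^ 2 - 2)]
  have hzpy : α ^ 2 < zp := by rw [hzp]; nlinarith [sq_nonneg (s - α ^ 2 + 2)]
  have key : (c ^ 2 - zm) * (c ^ 2 - zp) = c ^ 2 * c ^ 2 - (2 + α ^ 2) * c ^ 2 + α ^ 2 := by
    rw [hzm, hzp]
    linear_combination (-1 / 4 : ℝ) * hs2
  have h1c : (1 : ℝ) - c ^ 2 ≠ 0 := by
    intro h; apply hc1; linarith
  have hc2 : (c : ℝ) ^ 2 ≠ 0 := ne_of_gt hx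
  have hBeq : B = (c ^ 2 + (c ^ 2 - α ^ 2) * (1 - c ^ 2)) / (c ^ 2 * (1 - c ^ 2)) := by
    rw [hB]; field_simp; ring
  have hBnum : c ^ 2 + (c ^ 2 - α ^ 2) * (1 - c ^ 2) = -((c ^ 2 - zm) * (c ^ 2 - zp)) := by
    rw [key]; ring
  rcases lt_or_gt_of_ne hc1 with h1 | h1
  · -- c² < 1
    have hd : 0 < c ^ 2 * (1 - c ^ 2) := mul_pos hx (by linarith)
    have hAiff : A < 0 ↔ c ^ 2 < α ^ 2 := by
      rw [hA, div_neg_iff]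
      constructor
      · rintro (⟨_, h⟩ | ⟨h, _⟩) <;> linarith
      · intro h; right; exact ⟨by linarith, hd⟩
    have hBiff : 0 < B ↔ zm < c ^ 2 := by
      rw [hBeq, div_pos_iff]
      constructor
      · rintro (⟨h, _⟩ | ⟨_, h⟩)
        · rw [hBnum] at h
          by_contra hcon; push_neg at hcon
          have h2 : (0:ℝ) ≤ (c ^ 2 - zm) * (c ^ 2 - zp) :=
            mul_nonneg_of_nonpos_of_nonpos (by linarith) (by linarith)
          linarith
        · linarith
      · intro h; left; refine ⟨?_, hd⟩
        rw [hBnum]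
        have h2 : (c ^ 2 - zm) * (c ^ 2 - zp) < 0 :=
          mul_neg_of_pos_of_neg (by linarith) (by linarith)
        linarith
    constructor
    · rintro ⟨ha, hb⟩
      exact Or.inr ⟨hBiff.mp hb, lt_min_iff.mpr ⟨h1, hAiff.mp ha⟩⟩
    · rintro (hgt | ⟨h2, h3⟩)
      · linarith
      · rw [lt_min_iff] at h3
        exact ⟨hAiff.mpr h3.2, hBiff.mpr h2⟩
  · -- c² > 1
    have hd : c ^ 2 * (1 - c ^ 2) < 0 := mul_neg_of_pos_of_neg hx (by linarith)
    have hAiff : A < 0 ↔ α ^ 2 < c ^ 2 := by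
      rw [hA, div_neg_iff]
      constructor
      · rintro (⟨h, _⟩ | ⟨_, h⟩) <;> linarith
      · intro h; left; exact ⟨by linarith, hd⟩
    have hBiff : 0 < B ↔ zp < c ^ 2 := by
      rw [hBeq, div_pos_iff]
      constructor
      · rintro (⟨_, h⟩ | ⟨h, _⟩)
        · linarith
        · rw [hBnum] at h
          by_contra hcon; push_neg at hcon
          have h2 : (c ^ 2 - zm) * (c ^ 2 - zp) ≤ 0 :=
            mul_nonpos_of_nonneg_of_nonpos (by linarith) (by linarith)
          linarith
      · intro h; right; refine ⟨?_, hd⟩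
        rw [hBnum]
        have h2 : 0 < (c ^ 2 - zm) * (c ^ 2 - zp) :=
          mul_pos (by linarith) (by linarith)
        linarith
    constructor
    · rintro ⟨_, hb⟩
      exact Or.inl (hBiff.mp hb)
    · rintro (hgt | ⟨_, h3⟩)
      · exact ⟨hAiff.mpr (by linarith), hBiff.mpr hgt⟩
      · rw [lt_min_iff] at h3; linarith [h3.1]
end

section
/- Let α, c be real numbers with α ≠ 0, c ≠ 0, c² ≠ 1, c² < α² (i.e. μ = 1 - α²/c² < 0), and set A = (c²-α²)/(c²·(1-c²)), B = (1-α²/c²) + 1/(1-c²), z₋(α) = ((2+α²) - √(α⁴+4))/2. If A < 0 and B < 0, then c² < z₋(α). (This is the μ < 0 entry of the characterization of region 3L of the bifurcation diagram.) -/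
/-- The `μ < 0` entry of the characterization of region 3L of the bifurcation
diagram: if `c² < α²`, `A < 0` and `B < 0`, then `c² < z₋(α)`. -/
theorem stmt_9 (α c : ℝ) (hα : α ≠ 0) (hc : c ≠ 0) (hc1 : c ^ 2 ≠ 1)
    (hμneg : c ^ 2 < α ^ 2)
    (A B zm : ℝ)
    (hA : A = (c ^ 2 - α ^ 2) / (c ^ 2 * (1 - c ^ 2)))
    (hB : B = (1 - α ^ 2 / c ^ 2) + 1 / (1 - c ^ 2))
    (hzm : zm = ((2 + α ^ 2) - Real.sqrt (α ^ 4 + 4)) / 2)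
    (hAneg : A < 0) (hBneg : B < 0) :
    c ^ 2 < zm := by
  have hx0 : (0:ℝ) < c ^ 2 := by positivity
  have hnum : c ^ 2 - α ^ 2 < 0 := by linarith
  have hden : 0 < c ^ 2 * (1 - c ^ 2) := by
    rw [hA, div_neg_iff] at hAneg
    rcases hAneg with ⟨h1, h2⟩ | ⟨h1, h2⟩
    · linarith
    · exact h2
  have hx1 : c ^ 2 < 1 := by nlinarith
  -- p(c²) > 0
  have hp : c ^ 4 - (2 + α ^ 2) * c ^ 2 + α ^ 2 > 0 := by
    have h1 : (1 - c ^ 2) ≠ 0 := by intro h; apply hc1; linarith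
    have h2 : (c:ℝ) ^ 2 ≠ 0 := ne_of_gt hx0
    have hB' : ((c ^ 2 - α ^ 2) * (1 - c ^ 2) + c ^ 2) = B * (c ^ 2 * (1 - c ^ 2)) := by
      rw [hB]
      field_simp
    nlinarith [mul_neg_of_neg_of_pos hBneg hden]
  set s := Real.sqrt (α ^ 4 + 4) with hs
  have hs0 : 0 ≤ s := Real.sqrt_nonneg _
  have hs2 : s ^ 2 = α ^ 4 + 4 := Real.sq_sqrt (by positivity)
  have hT : (0:ℝ) < 2 + α ^ 2 - 2 * c ^ 2 := by nlinarith
  have hst : s < 2 + α ^ 2 - 2 * c ^ 2 := by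
    nlinarith [sq_nonneg (s - (2 + α ^ 2 - 2 * c ^ 2))]
  rw [hzm]
  linarith
end

section
/- Let α be real with 0 < α² < 4, and let c be real with c ≠ 0 and c² ≠ 1. Set A = (c²-α²)/(c²·(1-c²)) and B = (1-α²/c²) + 1/(1-c²). Then B² - 4A > 0; in particular, the characteristic equation λ⁴ - Bλ² + A = 0 has no non-real, non-purely-imaginary double roots, so the bifurcation curves with B = ±2√A, A > 0 do not occur. -/
/-- When `0 < α² < 4`, the discriminant `B² - 4A` of the characteristic
equation `λ⁴ - Bλ² + A = 0` is strictly positive, so the bifurcation curves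
`B = ±2√A`, `A > 0` do not occur. -/
theorem stmt_10 (α c : ℝ) (hα : α ≠ 0) (hα4 : α ^ 2 < 4)
    (hc : c ≠ 0) (hc1 : c ^ 2 ≠ 1)
    (A B : ℝ)
    (hA : A = (c ^ 2 - α ^ 2) / (c ^ 2 * (1 - c ^ 2)))
    (hB : B = (1 - α ^ 2 / c ^ 2) + 1 / (1 - c ^ 2)) :
    B ^ 2 - 4 * A > 0 := by
  have hc2 : (c:ℝ) ^ 2 ≠ 0 := pow_ne_zero 2 hc
  have hd : (1 : ℝ) - c ^ 2 ≠ 0 := by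
    intro h; apply hc1; linarith
  have hN : c ^ 4 - α ^ 2 * c ^ 2 + α ^ 2 > 0 := by
    have h1 : 0 < α ^ 2 := by positivity
    nlinarith [sq_nonneg (c ^ 2 - α ^ 2 / 2), sq_nonneg α, mul_pos h1 (by linarith : (0:ℝ) < 4 - α ^ 2)]
  have key : B ^ 2 - 4 * A =
      (c ^ 4 - α ^ 2 * c ^ 2 + α ^ 2) ^ 2 / (c ^ 2 * (1 - c ^ 2)) ^ 2 := by
    rw [hA, hB]; field_simp; ring
  rw [key]
  positivity
end

section
/- Let α, a_uu, a_uv, a_vv, b_uu, b_uv, b_vv be real with b_uu = -a_uv and b_uv = -a_vv, set f₁(u,v) = a_uu·u² + 2a_uv·u·v + a_vv·v² and f₂(u,v) = b_uu·u² + 2b_uv·u·v + b_vv·v². Let u, w, v, z : ℝ × ℝ → ℝ be smooth functions such that for every compact time interval there is a compact set K ⊂ ℝ with u(·,t), w(·,t), v(·,t), z(·,t) supported in K for all t in that interval, and suppose they satisfy ∂_t u = ∂_x w, ∂_t w - ∂_t∂_x² w = ∂_x(α²·u + f₁(u,v)), ∂_t v = z, ∂_t z = ∂_x² v - v + f₂(u,v).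 Then the momentum functional F(t) = ∫_ℝ (u·w + (∂_x u)·(∂_x w) + (∂_x v)·z) dx is constant in t. -/
open MeasureTheory Function Set

noncomputable def pd1 (f : ℝ → ℝ → ℝ) (x t : ℝ) : ℝ := deriv (fun ξ => f ξ t) x
noncomputable def pd2 (f : ℝ → ℝ → ℝ) (x t : ℝ) : ℝ := deriv (fun τ => f x τ) t

lemma hasDerivAt_slice1 {f : ℝ → ℝ → ℝ} (hf : ContDiff ℝ (⊤ : ℕ∞) (uncurry f)) (x t : ℝ) :
    HasDerivAt (fun ξ => f ξ t) (fderiv ℝ (uncurry f) (x, t) (1, 0)) x := by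
  have h1 : HasFDerivAt (uncurry f) (fderiv ℝ (uncurry f) (x, t)) (x, t) :=
    (hf.differentiable (by simp) (x, t)).hasFDerivAt
  have h2 : HasDerivAt (fun ξ : ℝ => (ξ, t)) (((1 : ℝ), (0 : ℝ))) x :=
    (hasDerivAt_id x).prodMk (hasDerivAt_const x t)
  exact h1.comp_hasDerivAt x h2

lemma hasDerivAt_slice2 {f : ℝ → ℝ → ℝ} (hf : ContDiff ℝ (⊤ : ℕ∞) (uncurry f)) (x t : ℝ) :
    HasDerivAt (fun τ => f x τ) (fderiv ℝ (uncurry f) (x, t) (0, 1)) t := by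
  have h1 : HasFDerivAt (uncurry f) (fderiv ℝ (uncurry f) (x, t)) (x, t) :=
    (hf.differentiable (by simp) (x, t)).hasFDerivAt
  have h2 : HasDerivAt (fun τ : ℝ => (x, τ)) (((0 : ℝ), (1 : ℝ))) t :=
    (hasDerivAt_const t x).prodMk (hasDerivAt_id t)
  exact h1.comp_hasDerivAt t h2

lemma pd1_eq {f : ℝ → ℝ → ℝ} (hf : ContDiff ℝ (⊤ : ℕ∞) (uncurry f)) (x t : ℝ) :
    pd1 f x t = fderiv ℝ (uncurry f) (x, t) (1, 0) := (hasDerivAt_slice1 hf x t).deriv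

lemma pd2_eq {f : ℝ → ℝ → ℝ} (hf : ContDiff ℝ (⊤ : ℕ∞) (uncurry f)) (x t : ℝ) :
    pd2 f x t = fderiv ℝ (uncurry f) (x, t) (0, 1) := (hasDerivAt_slice2 hf x t).deriv

lemma pd1_hasDerivAt {f : ℝ → ℝ → ℝ} (hf : ContDiff ℝ (⊤ : ℕ∞) (uncurry f)) (x t : ℝ) :
    HasDerivAt (fun ξ => f ξ t) (pd1 f x t) x := by
  rw [pd1_eq hf]; exact hasDerivAt_slice1 hf x t

lemma pd2_hasDerivAt {f : ℝ → ℝ → ℝ} (hf : ContDiff ℝ (⊤ : ℕ∞) (uncurry f)) (x t : ℝ) :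
    HasDerivAt (fun τ => f x τ) (pd2 f x t) t := by
  rw [pd2_eq hf]; exact hasDerivAt_slice2 hf x t

lemma contDiff_pd1 {f : ℝ → ℝ → ℝ} (hf : ContDiff ℝ (⊤ : ℕ∞) (uncurry f)) :
    ContDiff ℝ (⊤ : ℕ∞) (uncurry (pd1 f)) := by
  have : uncurry (pd1 f) = fun p : ℝ × ℝ => fderiv ℝ (uncurry f) p (1, 0) := by
    funext p
    exact pd1_eq hf p.1 p.2
  rw [this]
  exact (hf.fderiv_right (by simp)).clm_apply contDiff_const

lemma contDiff_pd2 {f : ℝ → ℝ → ℝ} (hf : ContDiff ℝ (⊤ : ℕ∞) (uncurry f)) :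
    ContDiff ℝ (⊤ : ℕ∞) (uncurry (pd2 f)) := by
  have : uncurry (pd2 f) = fun p : ℝ × ℝ => fderiv ℝ (uncurry f) p (0, 1) := by
    funext p
    exact pd2_eq hf p.1 p.2
  rw [this]
  exact (hf.fderiv_right (by simp)).clm_apply contDiff_const

lemma pd_symm {f : ℝ → ℝ → ℝ} (hf : ContDiff ℝ (⊤ : ℕ∞) (uncurry f)) (x t : ℝ) :
    pd2 (pd1 f) x t = pd1 (pd2 f) x t := by
  set F := uncurry f with hF
  have hF' : ContDiff ℝ (⊤ : ℕ∞) (fderiv ℝ F) := hf.fderiv_right (by simp)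
  have hdF' : Differentiable ℝ (fderiv ℝ F) := hF'.differentiable (by simp)
  have key : ∀ (c : ℝ → ℝ × ℝ) (c' : ℝ × ℝ) (s : ℝ),
      HasDerivAt c c' s → ∀ a : ℝ × ℝ,
      HasDerivAt (fun σ => fderiv ℝ F (c σ) a) (fderiv ℝ (fderiv ℝ F) (c s) c' a) s := by
    intro c c' s hder a
    have h1 : HasFDerivAt (fderiv ℝ F) (fderiv ℝ (fderiv ℝ F) (c s)) (c s) :=
      (hdF' (c s)).hasFDerivAt
    have h2 : HasDerivAt (fun σ => fderiv ℝ F (c σ)) (fderiv ℝ (fderiv ℝ F) (c s) c') s :=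
      h1.comp_hasDerivAt s hder
    exact (ContinuousLinearMap.apply ℝ ℝ a).hasFDerivAt.comp_hasDerivAt s h2
  have h21 : pd2 (pd1 f) x t = fderiv ℝ (fderiv ℝ F) (x, t) (0, 1) (1, 0) := by
    have hfun : (fun τ => pd1 f x τ) = fun τ => fderiv ℝ F (x, τ) (1, 0) := by
      funext τ; exact pd1_eq hf x τ
    have hder : HasDerivAt (fun τ : ℝ => ((x, τ) : ℝ × ℝ)) ((0 : ℝ), (1 : ℝ)) t :=
      (hasDerivAt_const t x).prodMk (hasDerivAt_id t)
    have := key (fun τ => (x, τ)) (0, 1) t hder (1, 0)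
    rw [pd2, hfun]
    exact this.deriv
  have h12 : pd1 (pd2 f) x t = fderiv ℝ (fderiv ℝ F) (x, t) (1, 0) (0, 1) := by
    have hfun : (fun ξ => pd2 f ξ t) = fun ξ => fderiv ℝ F (ξ, t) (0, 1) := by
      funext ξ; exact pd2_eq hf ξ t
    have hder : HasDerivAt (fun ξ : ℝ => ((ξ, t) : ℝ × ℝ)) ((1 : ℝ), (0 : ℝ)) x :=
      (hasDerivAt_id x).prodMk (hasDerivAt_const x t)
    have := key (fun ξ => (ξ, t)) (1, 0) x hder (0, 1)
    rw [pd1, hfun]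
    exact this.deriv
  rw [h21, h12]
  exact second_derivative_symmetric
    (fun y => ((hf.differentiable (by simp)) y).hasFDerivAt)
    ((hdF' (x, t)).hasFDerivAt) _ _

lemma deriv_zero_of_eventually {g : ℝ → ℝ} {x : ℝ} (h : ∀ᶠ y in nhds x, g y = 0) :
    deriv g x = 0 := by
  have h' : g =ᶠ[nhds x] (fun _ => (0 : ℝ)) := h
  rw [h'.deriv_eq]
  simp

lemma pd1_vanish {f : ℝ → ℝ → ℝ} {K : Set ℝ} (hK : IsClosed K) {τ : ℝ}
    (h : ∀ x ∉ K, f x τ = 0) : ∀ x ∉ K, pd1 f x τ = 0 := by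
  intro x hx
  apply deriv_zero_of_eventually
  filter_upwards [hK.isOpen_compl.eventually_mem hx] with y hy
  exact h y hy

lemma pd2_vanish {f : ℝ → ℝ → ℝ} {K : Set ℝ} {a b : ℝ}
    (h : ∀ τ ∈ Set.Ioo a b, ∀ x ∉ K, f x τ = 0) :
    ∀ τ ∈ Set.Ioo a b, ∀ x ∉ K, pd2 f x τ = 0 := by
  intro τ hτ x hx
  apply deriv_zero_of_eventually
  filter_upwards [isOpen_Ioo.eventually_mem hτ] with σ hσ
  exact h σ hσ x hx

lemma integral_deriv_zero {h h' : ℝ → ℝ} (hd : ∀ x, HasDerivAt h (h' x) x)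
    (hc : Continuous h') {K : Set ℝ} (hK : IsCompact K)
    (h0 : ∀ x, x ∉ K → h x = 0) : ∫ x : ℝ, h' x = 0 := by
  obtain ⟨R, hR⟩ := hK.isBounded.subset_closedBall 0
  set S : ℝ := |R| + 1 with hS
  have hS0 : 0 < S := by positivity
  have habs : ∀ y, y ∈ K → |y| ≤ R := by
    intro y hy
    have := Metric.mem_closedBall.1 (hR hy)
    rwa [Real.dist_eq, sub_zero] at this
  have hRIcc : K ⊆ Icc (-S) S := by
    intro k hk
    have h1 : |k| ≤ S := by
      have := le_abs_self R
      have := habs k hk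
      simp only [hS]; linarith
    exact abs_le.1 h1
  have h'0 : ∀ x, x ∉ Icc (-S) S → h' x = 0 := by
    intro x hx
    have hop : IsOpen (Icc (-S) S)ᶜ := isClosed_Icc.isOpen_compl
    have hev : ∀ᶠ y in nhds x, h y = 0 := by
      filter_upwards [hop.eventually_mem hx] with y hy
      exact h0 y (fun hyK => hy (hRIcc hyK))
    have hz : deriv h x = 0 := deriv_zero_of_eventually hev
    rw [← (hd x).deriv, hz]
  have hle : -S ≤ S := by linarith
  have h1 : (∫ x : ℝ, h' x) = ∫ x in Icc (-S) S, h' x :=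
    (setIntegral_eq_integral_of_forall_compl_eq_zero (fun x hx => h'0 x hx)).symm
  rw [h1, integral_Icc_eq_integral_Ioc, ← intervalIntegral.integral_of_le hle]
  have hderiv : deriv h = h' := funext fun x => (hd x).deriv
  rw [intervalIntegral.integral_deriv_eq_sub' h hderiv
      (fun x _ => (hd x).differentiableAt)
      (hderiv ▸ hc.continuousOn)]
  have hSK : S ∉ K := fun hmem => by
    have h2 := habs S hmem
    have h4 : R ≤ |R| := le_abs_self R
    rw [abs_of_pos hS0] at h2
    simp only [hS] at h2
    linarith
  have hSK' : -S ∉ K := fun hmem => by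
    have h2 := habs (-S) hmem
    rw [abs_neg, abs_of_pos hS0] at h2
    have h4 : R ≤ |R| := le_abs_self R
    simp only [hS] at h2
    linarith
  rw [h0 S hSK, h0 (-S) hSK', sub_zero]

theorem stmt_14_aux (α a_uu a_uv a_vv b_uu b_uv b_vv : ℝ)
    (hB : b_uu = -a_uv) (hC : b_uv = -a_vv)
    (f₁ f₂ : ℝ → ℝ → ℝ)
    (hf₁ : ∀ p q : ℝ, f₁ p q = a_uu * p ^ 2 + 2 * a_uv * p * q + a_vv * q ^ 2)
    (hf₂ : ∀ p q : ℝ, f₂ p q = b_uu * p ^ 2 + 2 * b_uv * p * q + b_vv * q ^ 2)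
    (u w v z : ℝ → ℝ → ℝ)
    (hu : ContDiff ℝ (⊤ : ℕ∞) (Function.uncurry u))
    (hw : ContDiff ℝ (⊤ : ℕ∞) (Function.uncurry w))
    (hv : ContDiff ℝ (⊤ : ℕ∞) (Function.uncurry v))
    (hz : ContDiff ℝ (⊤ : ℕ∞) (Function.uncurry z))
    (hsupp : ∀ J : Set ℝ, IsCompact J → ∃ K : Set ℝ, IsCompact K ∧
      ∀ t ∈ J, ∀ x : ℝ, x ∉ K → u x t = 0 ∧ w x t = 0 ∧ v x t = 0 ∧ z x t = 0)
    (heq1 : ∀ x t : ℝ, deriv (fun τ => u x τ) t = deriv (fun ξ => w ξ t) x)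
    (heq2 : ∀ x t : ℝ,
      deriv (fun τ => w x τ) t -
          deriv (fun τ => deriv (deriv (fun ξ => w ξ τ)) x) t =
        deriv (fun ξ => α ^ 2 * u ξ t + f₁ (u ξ t) (v ξ t)) x)
    (heq3 : ∀ x t : ℝ, deriv (fun τ => v x τ) t = z x t)
    (heq4 : ∀ x t : ℝ, deriv (fun τ => z x τ) t =
      deriv (deriv (fun ξ => v ξ t)) x - v x t + f₂ (u x t) (v x t))
    (t₀ : ℝ) :
    HasDerivAt (fun t => ∫ x : ℝ,
      (u x t * w x t + pd1 u x t * pd1 w x t + pd1 v x t * z x t)) 0 t₀ := by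
  obtain ⟨K, hKc, hKs⟩ := hsupp (Set.Icc (t₀ - 1) (t₀ + 1)) isCompact_Icc
  have hKcl : IsClosed K := hKc.isClosed
  have ht₀Icc : t₀ ∈ Icc (t₀ - 1) (t₀ + 1) := ⟨by linarith, by linarith⟩
  have ht₀Ioo : t₀ ∈ Ioo (t₀ - 1) (t₀ + 1) := ⟨by linarith, by linarith⟩
  have hIoosub : Ioo (t₀ - 1) (t₀ + 1) ⊆ Icc (t₀ - 1) (t₀ + 1) := Ioo_subset_Icc_self
  have hu1 := contDiff_pd1 hu
  have hw1 := contDiff_pd1 hw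
  have hv1 := contDiff_pd1 hv
  have hz1 := contDiff_pd1 hz
  have hw11 := contDiff_pd1 hw1
  have hw2 := contDiff_pd2 hw
  have hw21 := contDiff_pd1 hw2
  have hw211 := contDiff_pd1 hw21
  have hu2 := contDiff_pd2 hu
  have hv2 := contDiff_pd2 hv
  have hz2 := contDiff_pd2 hz
  have hu12 := contDiff_pd2 hu1
  have hw12 := contDiff_pd2 hw1
  have hv12 := contDiff_pd2 hv1
  -- vanishing outside K
  have h0u : ∀ τ ∈ Icc (t₀-1) (t₀+1), ∀ x ∉ K, u x τ = 0 :=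
    fun τ hτ x hx => (hKs τ hτ x hx).1
  have h0w : ∀ τ ∈ Icc (t₀-1) (t₀+1), ∀ x ∉ K, w x τ = 0 :=
    fun τ hτ x hx => (hKs τ hτ x hx).2.1
  have h0v : ∀ τ ∈ Icc (t₀-1) (t₀+1), ∀ x ∉ K, v x τ = 0 :=
    fun τ hτ x hx => (hKs τ hτ x hx).2.2.1
  have h0z : ∀ τ ∈ Icc (t₀-1) (t₀+1), ∀ x ∉ K, z x τ = 0 :=
    fun τ hτ x hx => (hKs τ hτ x hx).2.2.2
  have h0u1 : ∀ τ ∈ Icc (t₀-1) (t₀+1), ∀ x ∉ K, pd1 u x τ = 0 :=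
    fun τ hτ => pd1_vanish hKcl (h0u τ hτ)
  have h0w1 : ∀ τ ∈ Icc (t₀-1) (t₀+1), ∀ x ∉ K, pd1 w x τ = 0 :=
    fun τ hτ => pd1_vanish hKcl (h0w τ hτ)
  have h0v1 : ∀ τ ∈ Icc (t₀-1) (t₀+1), ∀ x ∉ K, pd1 v x τ = 0 :=
    fun τ hτ => pd1_vanish hKcl (h0v τ hτ)
  have h0u2 : ∀ τ ∈ Ioo (t₀-1) (t₀+1), ∀ x ∉ K, pd2 u x τ = 0 :=
    pd2_vanish (fun τ hτ => h0u τ (hIoosub hτ))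
  have h0w2 : ∀ τ ∈ Ioo (t₀-1) (t₀+1), ∀ x ∉ K, pd2 w x τ = 0 :=
    pd2_vanish (fun τ hτ => h0w τ (hIoosub hτ))
  have h0z2 : ∀ τ ∈ Ioo (t₀-1) (t₀+1), ∀ x ∉ K, pd2 z x τ = 0 :=
    pd2_vanish (fun τ hτ => h0z τ (hIoosub hτ))
  have h0u12 : ∀ τ ∈ Ioo (t₀-1) (t₀+1), ∀ x ∉ K, pd2 (pd1 u) x τ = 0 :=
    pd2_vanish (fun τ hτ => h0u1 τ (hIoosub hτ))
  have h0w12 : ∀ τ ∈ Ioo (t₀-1) (t₀+1), ∀ x ∉ K, pd2 (pd1 w) x τ = 0 :=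
    pd2_vanish (fun τ hτ => h0w1 τ (hIoosub hτ))
  have h0v12 : ∀ τ ∈ Ioo (t₀-1) (t₀+1), ∀ x ∉ K, pd2 (pd1 v) x τ = 0 :=
    pd2_vanish (fun τ hτ => h0v1 τ (hIoosub hτ))
  have h0w21 : ∀ x, x ∉ K → pd1 (pd2 w) x t₀ = 0 :=
    pd1_vanish hKcl (h0w2 t₀ ht₀Ioo)
  -- continuity of the joint functions
  have cU : Continuous fun p : ℝ × ℝ => u p.1 p.2 := hu.continuous
  have cW : Continuous fun p : ℝ × ℝ => w p.1 p.2 := hw.continuous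
  have cV : Continuous fun p : ℝ × ℝ => v p.1 p.2 := hv.continuous
  have cZ : Continuous fun p : ℝ × ℝ => z p.1 p.2 := hz.continuous
  have cU1 : Continuous fun p : ℝ × ℝ => pd1 u p.1 p.2 := hu1.continuous
  have cW1 : Continuous fun p : ℝ × ℝ => pd1 w p.1 p.2 := hw1.continuous
  have cV1 : Continuous fun p : ℝ × ℝ => pd1 v p.1 p.2 := hv1.continuous
  have cU2 : Continuous fun p : ℝ × ℝ => pd2 u p.1 p.2 := hu2.continuous
  have cW2 : Continuous fun p : ℝ × ℝ => pd2 w p.1 p.2 := hw2.continuous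
  have cZ2 : Continuous fun p : ℝ × ℝ => pd2 z p.1 p.2 := hz2.continuous
  have cU12 : Continuous fun p : ℝ × ℝ => pd2 (pd1 u) p.1 p.2 := hu12.continuous
  have cW12 : Continuous fun p : ℝ × ℝ => pd2 (pd1 w) p.1 p.2 := hw12.continuous
  have cV12 : Continuous fun p : ℝ × ℝ => pd2 (pd1 v) p.1 p.2 := hv12.continuous
  have cG : Continuous fun p : ℝ × ℝ =>
      (pd2 u p.1 p.2 * w p.1 p.2 + u p.1 p.2 * pd2 w p.1 p.2) +
      (pd2 (pd1 u) p.1 p.2 * pd1 w p.1 p.2 + pd1 u p.1 p.2 * pd2 (pd1 w) p.1 p.2) +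
      (pd2 (pd1 v) p.1 p.2 * z p.1 p.2 + pd1 v p.1 p.2 * pd2 z p.1 p.2) :=
    (((cU2.mul cW).add (cU.mul cW2)).add ((cU12.mul cW1).add (cU1.mul cW12))).add
      ((cV12.mul cZ).add (cV1.mul cZ2))
  have sliceg : ∀ τ : ℝ, Continuous fun x : ℝ =>
      u x τ * w x τ + pd1 u x τ * pd1 w x τ + pd1 v x τ * z x τ := by
    intro τ
    have ι : Continuous fun x : ℝ => ((x, τ) : ℝ × ℝ) := continuous_id.prodMk continuous_const
    exact (((cU.comp ι).mul (cW.comp ι)).add ((cU1.comp ι).mul (cW1.comp ι))).add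
      ((cV1.comp ι).mul (cZ.comp ι))
  have sliceG : ∀ τ : ℝ, Continuous fun x : ℝ =>
      (pd2 u x τ * w x τ + u x τ * pd2 w x τ) +
      (pd2 (pd1 u) x τ * pd1 w x τ + pd1 u x τ * pd2 (pd1 w) x τ) +
      (pd2 (pd1 v) x τ * z x τ + pd1 v x τ * pd2 z x τ) := by
    intro τ
    have ι : Continuous fun x : ℝ => ((x, τ) : ℝ × ℝ) := continuous_id.prodMk continuous_const
    exact cG.comp ι
  obtain ⟨C, hCb⟩ := (hKc.prod (isCompact_Icc (a := t₀ - 1) (b := t₀ + 1))).exists_bound_of_continuousOn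
    cG.continuousOn
  -- the six hypotheses for differentiation under the integral
  have hmeas : ∀ᶠ τ in nhds t₀, AEStronglyMeasurable (fun x : ℝ =>
      u x τ * w x τ + pd1 u x τ * pd1 w x τ + pd1 v x τ * z x τ) volume :=
    Filter.Eventually.of_forall fun τ => (sliceg τ).aestronglyMeasurable
  have hint : Integrable (fun x : ℝ =>
      u x t₀ * w x t₀ + pd1 u x t₀ * pd1 w x t₀ + pd1 v x t₀ * z x t₀) volume := by
    refine (sliceg t₀).integrable_of_hasCompactSupport (HasCompactSupport.intro hKc ?_)
    intro x hx
    rw [h0u t₀ ht₀Icc x hx, h0u1 t₀ ht₀Icc x hx, h0v1 t₀ ht₀Icc x hx]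
    ring
  have hmeas' : AEStronglyMeasurable (fun x : ℝ =>
      (pd2 u x t₀ * w x t₀ + u x t₀ * pd2 w x t₀) +
      (pd2 (pd1 u) x t₀ * pd1 w x t₀ + pd1 u x t₀ * pd2 (pd1 w) x t₀) +
      (pd2 (pd1 v) x t₀ * z x t₀ + pd1 v x t₀ * pd2 z x t₀)) volume :=
    (sliceG t₀).aestronglyMeasurable
  have hbnd : ∀ᵐ x : ℝ ∂volume, ∀ τ ∈ Metric.ball t₀ 1,
      ‖(pd2 u x τ * w x τ + u x τ * pd2 w x τ) +
      (pd2 (pd1 u) x τ * pd1 w x τ + pd1 u x τ * pd2 (pd1 w) x τ) +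
      (pd2 (pd1 v) x τ * z x τ + pd1 v x τ * pd2 z x τ)‖ ≤ K.indicator (fun _ => C) x := by
    refine Filter.Eventually.of_forall fun x => fun τ hτ => ?_
    rw [Real.ball_eq_Ioo] at hτ
    by_cases hx : x ∈ K
    · rw [indicator_of_mem hx]
      exact hCb (x, τ) ⟨hx, hIoosub hτ⟩
    · rw [indicator_of_notMem hx, h0u2 τ hτ x hx, h0w2 τ hτ x hx, h0u12 τ hτ x hx,
        h0w12 τ hτ x hx, h0v12 τ hτ x hx, h0z2 τ hτ x hx]
      simp
  have hbint : Integrable (K.indicator (fun _ => C) : ℝ → ℝ) volume := by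
    rw [integrable_indicator_iff hKc.measurableSet]
    exact integrableOn_const hKc.measure_lt_top.ne
  have hdiff : ∀ᵐ x : ℝ ∂volume, ∀ τ ∈ Metric.ball t₀ 1,
      HasDerivAt (fun τ' => u x τ' * w x τ' + pd1 u x τ' * pd1 w x τ' + pd1 v x τ' * z x τ')
        ((pd2 u x τ * w x τ + u x τ * pd2 w x τ) +
         (pd2 (pd1 u) x τ * pd1 w x τ + pd1 u x τ * pd2 (pd1 w) x τ) +
         (pd2 (pd1 v) x τ * z x τ + pd1 v x τ * pd2 z x τ)) τ :=
    Filter.Eventually.of_forall fun x => fun τ _ =>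
      (((pd2_hasDerivAt hu x τ).mul (pd2_hasDerivAt hw x τ)).add
        ((pd2_hasDerivAt hu1 x τ).mul (pd2_hasDerivAt hw1 x τ))).add
        ((pd2_hasDerivAt hv1 x τ).mul (pd2_hasDerivAt hz x τ))
  obtain ⟨-, hder⟩ := hasDerivAt_integral_of_dominated_loc_of_deriv_le
    (F := fun τ x => u x τ * w x τ + pd1 u x τ * pd1 w x τ + pd1 v x τ * z x τ)
    (F' := fun τ x =>
      (pd2 u x τ * w x τ + u x τ * pd2 w x τ) +
      (pd2 (pd1 u) x τ * pd1 w x τ + pd1 u x τ * pd2 (pd1 w) x τ) +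
      (pd2 (pd1 v) x τ * z x τ + pd1 v x τ * pd2 z x τ))
    (bound := K.indicator (fun _ => C))
    (Metric.ball_mem_nhds t₀ one_pos) hmeas hint hmeas' hbnd hbint hdiff
  suffices hzero : (∫ x : ℝ,
      ((pd2 u x t₀ * w x t₀ + u x t₀ * pd2 w x t₀) +
      (pd2 (pd1 u) x t₀ * pd1 w x t₀ + pd1 u x t₀ * pd2 (pd1 w) x t₀) +
      (pd2 (pd1 v) x t₀ * z x t₀ + pd1 v x t₀ * pd2 z x t₀))) = 0 by
    rw [hzero] at hder
    exact hder
  -- the momentum flux function whose x-derivative is the integrand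
  refine integral_deriv_zero (h := fun ξ =>
      w ξ t₀ * w ξ t₀ / 2 + pd1 w ξ t₀ * pd1 w ξ t₀ / 2 + u ξ t₀ * pd1 (pd2 w) ξ t₀ +
      α ^ 2 * (u ξ t₀ * u ξ t₀) / 2 + 2 / 3 * a_uu * (u ξ t₀ * u ξ t₀ * u ξ t₀) +
      a_uv * (u ξ t₀ * u ξ t₀ * v ξ t₀) + b_vv / 3 * (v ξ t₀ * v ξ t₀ * v ξ t₀) +
      z ξ t₀ * z ξ t₀ / 2 + pd1 v ξ t₀ * pd1 v ξ t₀ / 2 - v ξ t₀ * v ξ t₀ / 2)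
    ?_ (sliceG t₀) hKc ?_
  · intro x
    have du := pd1_hasDerivAt hu x t₀
    have dw := pd1_hasDerivAt hw x t₀
    have dv := pd1_hasDerivAt hv x t₀
    have dz := pd1_hasDerivAt hz x t₀
    have dw1 := pd1_hasDerivAt hw1 x t₀
    have dv1 := pd1_hasDerivAt hv1 x t₀
    have dP := pd1_hasDerivAt hw21 x t₀
    have hnat := ((((((((((dw.mul dw).div_const 2).add ((dw1.mul dw1).div_const 2)).add
      (du.mul dP)).add ((HasDerivAt.const_mul (α ^ 2) (du.mul du)).div_const 2)).add
      (HasDerivAt.const_mul (2 / 3 * a_uu) ((du.mul du).mul du))).add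
      (HasDerivAt.const_mul a_uv ((du.mul du).mul dv))).add
      (HasDerivAt.const_mul (b_vv / 3) ((dv.mul dv).mul dv))).add
      ((dz.mul dz).div_const 2)).add ((dv1.mul dv1).div_const 2)).sub
      ((dv.mul dv).div_const 2)
    refine hnat.congr_deriv ?_
    have efun1 : pd2 u = pd1 w := funext fun a => funext fun b => heq1 a b
    have efun3 : pd2 v = z := funext fun a => funext fun b => heq3 a b
    have e1 : pd2 u x t₀ = pd1 w x t₀ := heq1 x t₀
    have e2 : pd2 (pd1 u) x t₀ = pd1 (pd1 w) x t₀ := by rw [pd_symm hu x t₀, efun1]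
    have e3 : pd2 (pd1 w) x t₀ = pd1 (pd2 w) x t₀ := pd_symm hw x t₀
    have e4 : pd2 (pd1 v) x t₀ = pd1 z x t₀ := by rw [pd_symm hv x t₀, efun3]
    have e5 : pd2 z x t₀ = pd1 (pd1 v) x t₀ - v x t₀ + f₂ (u x t₀) (v x t₀) := heq4 x t₀
    have hfuneq : (fun ξ => α ^ 2 * u ξ t₀ + f₁ (u ξ t₀) (v ξ t₀))
        = fun ξ => α ^ 2 * u ξ t₀ + (a_uu * (u ξ t₀ * u ξ t₀) +
          2 * a_uv * (u ξ t₀ * v ξ t₀) + a_vv * (v ξ t₀ * v ξ t₀)) := by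
      funext ξ; rw [hf₁]; ring
    have hD2 : HasDerivAt (fun ξ => α ^ 2 * u ξ t₀ + (a_uu * (u ξ t₀ * u ξ t₀) +
          2 * a_uv * (u ξ t₀ * v ξ t₀) + a_vv * (v ξ t₀ * v ξ t₀)))
        (α ^ 2 * pd1 u x t₀ + (a_uu * (pd1 u x t₀ * u x t₀ + u x t₀ * pd1 u x t₀) +
          2 * a_uv * (pd1 u x t₀ * v x t₀ + u x t₀ * pd1 v x t₀) +
          a_vv * (pd1 v x t₀ * v x t₀ + v x t₀ * pd1 v x t₀))) x :=
      (HasDerivAt.const_mul (α ^ 2) du).add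
        (((HasDerivAt.const_mul a_uu (du.mul du)).add
          (HasDerivAt.const_mul (2 * a_uv) (du.mul dv))).add
          (HasDerivAt.const_mul a_vv (dv.mul dv)))
    have hsym6 : pd2 (pd1 (pd1 w)) x t₀ = pd1 (pd1 (pd2 w)) x t₀ := by
      rw [pd_symm hw1 x t₀]
      have hh : pd2 (pd1 w) = pd1 (pd2 w) := funext fun a => funext fun b => pd_symm hw a b
      rw [hh]
    have h2 : pd2 w x t₀ - pd2 (pd1 (pd1 w)) x t₀ =
        deriv (fun ξ => α ^ 2 * u ξ t₀ + f₁ (u ξ t₀) (v ξ t₀)) x := heq2 x t₀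
    rw [hfuneq, hD2.deriv, hsym6] at h2
    have e6 := eq_add_of_sub_eq h2
    rw [e1, e2, e3, e4, e5, e6, hf₂, hB, hC]
    simp only [Pi.mul_apply]
    ring
  · intro x hx
    simp only [h0w t₀ ht₀Icc x hx, h0w1 t₀ ht₀Icc x hx, h0u t₀ ht₀Icc x hx,
      h0v t₀ ht₀Icc x hx, h0z t₀ ht₀Icc x hx, h0v1 t₀ ht₀Icc x hx]
    norm_num

/-- Conservation of the momentum functional
`F(t) = ∫ (u·w + u_x·w_x + v_x·z) dx`
for smooth, spatially compactly supported solutions of the first-order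
reformulation of the Klein–Gordon–Boussinesq system, under the Hamiltonian
conditions `b_uu = -a_uv`, `b_uv = -a_vv`. -/
theorem stmt_14 (α a_uu a_uv a_vv b_uu b_uv b_vv : ℝ)
    (hB : b_uu = -a_uv) (hC : b_uv = -a_vv)
    (f₁ f₂ : ℝ → ℝ → ℝ)
    (hf₁ : ∀ p q : ℝ, f₁ p q = a_uu * p ^ 2 + 2 * a_uv * p * q + a_vv * q ^ 2)
    (hf₂ : ∀ p q : ℝ, f₂ p q = b_uu * p ^ 2 + 2 * b_uv * p * q + b_vv * q ^ 2)
    (u w v z : ℝ → ℝ → ℝ)  -- arguments: space `x`, time `t`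
    (hu : ContDiff ℝ (⊤ : ℕ∞) (Function.uncurry u))
    (hw : ContDiff ℝ (⊤ : ℕ∞) (Function.uncurry w))
    (hv : ContDiff ℝ (⊤ : ℕ∞) (Function.uncurry v))
    (hz : ContDiff ℝ (⊤ : ℕ∞) (Function.uncurry z))
    (hsupp : ∀ J : Set ℝ, IsCompact J → ∃ K : Set ℝ, IsCompact K ∧
      ∀ t ∈ J, ∀ x : ℝ, x ∉ K → u x t = 0 ∧ w x t = 0 ∧ v x t = 0 ∧ z x t = 0)
    (heq1 : ∀ x t : ℝ, deriv (fun τ => u x τ) t = deriv (fun ξ => w ξ t) x)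
    (heq2 : ∀ x t : ℝ,
      deriv (fun τ => w x τ) t -
          deriv (fun τ => deriv (deriv (fun ξ => w ξ τ)) x) t =
        deriv (fun ξ => α ^ 2 * u ξ t + f₁ (u ξ t) (v ξ t)) x)
    (heq3 : ∀ x t : ℝ, deriv (fun τ => v x τ) t = z x t)
    (heq4 : ∀ x t : ℝ, deriv (fun τ => z x τ) t =
      deriv (deriv (fun ξ => v ξ t)) x - v x t + f₂ (u x t) (v x t))
    (F : ℝ → ℝ)
    (hF : ∀ t : ℝ, F t = ∫ x : ℝ,
      (u x t * w x t + deriv (fun ξ => u ξ t) x * deriv (fun ξ => w ξ t) x +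
        deriv (fun ξ => v ξ t) x * z x t)) :
    ∀ t₁ t₂ : ℝ, F t₁ = F t₂ := by
  intro t₁ t₂
  have hFeq : F = fun t => ∫ x : ℝ,
      (u x t * w x t + pd1 u x t * pd1 w x t + pd1 v x t * z x t) := by
    funext t
    exact hF t
  rw [hFeq]
  have key := stmt_14_aux α a_uu a_uv a_vv b_uu b_uv b_vv hB hC f₁ f₂ hf₁ hf₂
    u w v z hu hw hv hz hsupp heq1 heq2 heq3 heq4
  exact is_const_of_deriv_eq_zero
    (fun s => (key s).differentiableAt) (fun s => (key s).deriv) t₁ t₂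
end

section
/- Let α, c be real with 0 < c² < 1 and c ≠ 0, let b = 1/√(1-c²) (so (1-c²)·b² = 1), let b_uv ≠ 0 and a_vv be real with a_uu = 6·(b²-1)·b_uv, and set A₁ = 1/b_uv; let A₂ be a real number satisfying a_vv·b_uv·A₂² = c² - α² - 4b²c². Define u(ξ) = A₁·sech²(bξ) and v(ξ) = A₂·sech(bξ). Then for all ξ ∈ ℝ: (c²-α²)·u(ξ) - c²·u''(ξ) = a_uu·u(ξ)² + a_vv·v(ξ)² and v(ξ) - (1-c²)·v''(ξ) = 2b_uv·u(ξ)·v(ξ). In particular, u(x - c t), v(x - c t) is an explicit solitary-wave solution of the Klein–Gordon–Boussinesq system with a_uv = b_uu = b_vv = 0. -/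
/-!
With `s = sech (b ξ)` one has `s' = -b tanh (b ξ) s` and `tanh' (b ξ) = b s²`, and `tanh² + sech² = 1`,
so `(sⁿ)'' = n b² (n sⁿ - (n + 1) sⁿ⁺²)`. Both profile equations thereby become polynomial identities
in `s` (in `s², s⁴`, resp. `s, s³`), whose coefficients vanish exactly because `b² (1 - c²) = 1`,
`b_uv A₁ = 1`, and the constraints on `a_uu` and `A₂`.
-/

open Real

theorem tanh_sq_add_inv_cosh_sq (x : ℝ) : tanh x ^ 2 + (cosh x)⁻¹ ^ 2 = 1 := by
  have hcosh := (cosh_pos x).ne'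
  rw [tanh_eq_sinh_div_cosh]
  field_simp
  linear_combination -cosh_sq_sub_sinh_sq x

section SechConstMul

variable (b : ℝ)

theorem hasDerivAt_tanh_const_mul (x : ℝ) :
    HasDerivAt (fun ξ ↦ tanh (b * ξ)) (b * (cosh (b * x))⁻¹ ^ 2) x := by
  have hlin : HasDerivAt (fun ξ ↦ b * ξ) b x := by simpa using (hasDerivAt_id x).const_mul b
  have hcosh := (cosh_pos (b * x)).ne'
  rw [show (fun ξ ↦ tanh (b * ξ)) = fun ξ ↦ sinh (b * ξ) / cosh (b * ξ) from
    funext fun ξ ↦ tanh_eq_sinh_div_cosh _]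
  refine (hlin.sinh.div hlin.cosh hcosh).congr_deriv ?_
  field_simp
  linear_combination b * cosh_sq_sub_sinh_sq (b * x)

theorem hasDerivAt_inv_cosh_const_mul (x : ℝ) :
    HasDerivAt (fun ξ ↦ (cosh (b * ξ))⁻¹) (-b * tanh (b * x) * (cosh (b * x))⁻¹) x := by
  have hlin : HasDerivAt (fun ξ ↦ b * ξ) b x := by simpa using (hasDerivAt_id x).const_mul b
  have hcosh := (cosh_pos (b * x)).ne'
  refine (hlin.cosh.inv hcosh).congr_deriv ?_
  rw [tanh_eq_sinh_div_cosh]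
  field_simp

theorem hasDerivAt_inv_cosh_const_mul_pow (n : ℕ) (x : ℝ) :
    HasDerivAt (fun ξ ↦ (cosh (b * ξ))⁻¹ ^ n)
      (-(n * b) * tanh (b * x) * (cosh (b * x))⁻¹ ^ n) x := by
  refine ((hasDerivAt_inv_cosh_const_mul b x).fun_pow n).congr_deriv ?_
  rcases Nat.eq_zero_or_pos n with rfl | hn
  · simp
  · rw [← pow_sub_one_mul hn.ne']
    ring

theorem deriv_deriv_inv_cosh_const_mul_pow (n : ℕ) (x : ℝ) :
    deriv (deriv fun ξ ↦ (cosh (b * ξ))⁻¹ ^ n) x =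
      n * b ^ 2 * (n * (cosh (b * x))⁻¹ ^ n - (n + 1) * (cosh (b * x))⁻¹ ^ (n + 2)) := by
  have hderiv : deriv (fun ξ ↦ (cosh (b * ξ))⁻¹ ^ n) =
      fun ξ ↦ -(n * b) * (tanh (b * ξ) * (cosh (b * ξ))⁻¹ ^ n) := by
    funext ξ
    rw [(hasDerivAt_inv_cosh_const_mul_pow b n ξ).deriv, mul_assoc]
  rw [hderiv, (((hasDerivAt_tanh_const_mul b x).fun_mul
    (hasDerivAt_inv_cosh_const_mul_pow b n x)).const_mul _).deriv]
  linear_combination (n * b ^ 2 * n * (cosh (b * x))⁻¹ ^ n) * tanh_sq_add_inv_cosh_sq (b * x)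

end SechConstMul

theorem stmt_16_general (α c : ℝ) (hc1 : c ^ 2 < 1)
    (b a_uu a_vv b_uv A₁ A₂ : ℝ)
    (hb : b = 1 / Real.sqrt (1 - c ^ 2))
    (hbuv : b_uv ≠ 0)
    (hauu : a_uu = 6 * (b ^ 2 - 1) * b_uv)
    (hA₁ : A₁ = 1 / b_uv)
    (hA₂ : a_vv * b_uv * A₂ ^ 2 = c ^ 2 - α ^ 2 - 4 * b ^ 2 * c ^ 2)
    (u v : ℝ → ℝ)
    (hu : ∀ ξ : ℝ, u ξ = A₁ * (1 / Real.cosh (b * ξ)) ^ 2)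
    (hv : ∀ ξ : ℝ, v ξ = A₂ * (1 / Real.cosh (b * ξ))) :
    ∀ ξ : ℝ,
      (c ^ 2 - α ^ 2) * u ξ - c ^ 2 * deriv (deriv u) ξ =
          a_uu * (u ξ) ^ 2 + a_vv * (v ξ) ^ 2 ∧
        v ξ - (1 - c ^ 2) * deriv (deriv v) ξ = 2 * b_uv * u ξ * v ξ := by
  have hb_sq : b ^ 2 * (1 - c ^ 2) = 1 := by
    have h1c : 0 < 1 - c ^ 2 := by linarith
    rw [hb, div_pow, one_pow, sq_sqrt h1c.le]
    field_simp
  have hA₁_mul : b_uv * A₁ = 1 := by rw [hA₁]; field_simp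
  have hvv : a_vv * A₂ ^ 2 = (c ^ 2 - α ^ 2 - 4 * b ^ 2 * c ^ 2) * A₁ := by
    linear_combination A₁ * hA₂ - a_vv * A₂ ^ 2 * hA₁_mul
  have huu : a_uu * A₁ = 6 * b ^ 2 * c ^ 2 := by
    rw [hauu]
    linear_combination 6 * (b ^ 2 - 1) * hA₁_mul + 6 * hb_sq
  have hu' : u = fun ξ ↦ A₁ * (cosh (b * ξ))⁻¹ ^ 2 := funext fun ξ ↦ by rw [hu, one_div]
  have hv' : v = fun ξ ↦ A₂ * (cosh (b * ξ))⁻¹ ^ 1 := funext fun ξ ↦ by rw [hv, one_div, pow_one]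
  intro ξ
  simp only [hu', hv', deriv_const_mul_field', deriv_deriv_inv_cosh_const_mul_pow]
  set s := (cosh (b * ξ))⁻¹
  push_cast
  constructor
  · linear_combination (-s ^ 2) * hvv - A₁ * s ^ 4 * huu
  · linear_combination (2 * A₂ * s ^ 3 - A₂ * s) * hb_sq - 2 * A₂ * s ^ 3 * hA₁_mul

/-- Explicit `sech²`/`sech` solitary-wave profiles for the
Klein–Gordon–Boussinesq system with `a_uv = b_uu = b_vv = 0`:
`u = A₁ sech²(bξ)`, `v = A₂ sech(bξ)` solve the traveling-wave profile system
`(c²-α²)u - c²u'' = a_uu u² + a_vv v²`, `v - (1-c²)v'' = 2b_uv uv`. -/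
theorem stmt_16 (α c : ℝ) (hc0 : 0 < c ^ 2) (hc1 : c ^ 2 < 1)
    (b a_uu a_vv b_uv A₁ A₂ : ℝ)
    (hb : b = 1 / Real.sqrt (1 - c ^ 2))
    (hbuv : b_uv ≠ 0)
    (hauu : a_uu = 6 * (b ^ 2 - 1) * b_uv)
    (hA₁ : A₁ = 1 / b_uv)
    (hA₂ : a_vv * b_uv * A₂ ^ 2 = c ^ 2 - α ^ 2 - 4 * b ^ 2 * c ^ 2)
    (u v : ℝ → ℝ)
    (hu : ∀ ξ : ℝ, u ξ = A₁ * (1 / Real.cosh (b * ξ)) ^ 2)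
    (hv : ∀ ξ : ℝ, v ξ = A₂ * (1 / Real.cosh (b * ξ))) :
    ∀ ξ : ℝ,
      (c ^ 2 - α ^ 2) * u ξ - c ^ 2 * deriv (deriv u) ξ =
          a_uu * (u ξ) ^ 2 + a_vv * (v ξ) ^ 2 ∧
        v ξ - (1 - c ^ 2) * deriv (deriv v) ξ = 2 * b_uv * u ξ * v ξ :=
  stmt_16_general α c hc1 b a_uu a_vv b_uv A₁ A₂ hb hbuv hauu hA₁ hA₂ u v hu hv
end
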